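/- arXiv:2012.06394 — 2 statements merged into one kernel-verified Lean document; each statement's English description precedes it below -/
import Mathlib

section
/- Let β₀ + Σ_{j=1}^n β_j x_j + β′ y ≥ 0 be any inequality valid for conv(G), let x̃ ∈ X, and partition N into N₁ = {j : x̃_j = ℓ}, N₂ = {j : x̃_j = u}, N₃ = {j : ℓ < x̃_j < u}. Then the following are equivalent: (1) (x̃, m(x̃)) satisfies the inequality exactly; (2) (x̂, m(x̂)) satisfies the inequality exactly for every x̂ ∈ X with x̂_j = ℓ for all j ∈ N₁ and x̂_j = u for all j ∈ N₂; (3) (x̂, m(x̂)) satisfies the inequality exactly for every vertex x̂ of X with x̂_j = ℓ for all j ∈ N₁ and x̂_j = u for all j ∈ N₂. -/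
/-!
A multilinear function on the box `[ℓ,u]^ι` is the convex combination of its values at the
vertices, with the multilinear weights `∏_{j∈S} t_j ∏_{j∉S} (1 - t_j)`, `t_j = (x_j-ℓ)/(u-ℓ)`.
The left-hand side of the inequality along the graph, `x ↦ β₀ + β·x + β′ m(x)`, is multilinear
and nonnegative at the vertices, so it vanishes at `x̃` iff it vanishes at every vertex of
positive weight, i.e. at every vertex of the smallest face of the box containing `x̃`; the same
interpolation then propagates the zero to every point of that face.
-/

open Finset

/-- The symmetric multilinear polynomial `m(x) = ∑_{i=2}^n c_i ∑_{|J|=i} ∏_{j∈J} x_j`. -/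
noncomputable def mPoly (n : ℕ) (c : ℕ → ℝ) (x : Fin n → ℝ) : ℝ :=
  ∑ i ∈ Finset.Icc 2 n, c i *
    ∑ J ∈ Finset.powersetCard i (Finset.univ : Finset (Fin n)), ∏ j ∈ J, x j

/-- The box `X = [ℓ,u]^n`. -/
def Xbox (n : ℕ) (ℓ u : ℝ) : Set (Fin n → ℝ) :=
  {x | ∀ j, x j ∈ Set.Icc ℓ u}

/-- The graph `G = {(x,y) : x ∈ X, y = m(x)}`. -/
def Gset (n : ℕ) (ℓ u : ℝ) (c : ℕ → ℝ) : Set ((Fin n → ℝ) × ℝ) :=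
  {p | p.1 ∈ Xbox n ℓ u ∧ p.2 = mPoly n c p.1}

/-- The point `x^k` whose first `k` coordinates are `u` and remaining ones are `ℓ`. -/
def xpt (n : ℕ) (ℓ u : ℝ) (k : ℕ) : Fin n → ℝ :=
  fun j => if (j : ℕ) < k then u else ℓ

/-- `m(x^k)`. -/
noncomputable def mval (n : ℕ) (ℓ u : ℝ) (c : ℕ → ℝ) (k : ℕ) : ℝ :=
  mPoly n c (xpt n ℓ u k)

/-- `L_k(β₀,β) = β₀ + u ∑_{j=1}^k β_j + ℓ ∑_{j=k+1}^n β_j`. -/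
noncomputable def Lk (n : ℕ) (ℓ u : ℝ) (β₀ : ℝ) (β : Fin n → ℝ) (k : ℕ) : ℝ :=
  β₀ + u * ∑ j ∈ Finset.univ.filter (fun j : Fin n => (j : ℕ) < k), β j
     + ℓ * ∑ j ∈ Finset.univ.filter (fun j : Fin n => k ≤ (j : ℕ)), β j

/-- The left-hand side `β₀ + ∑_j β_j x_j + β′ y` of an inequality, at the point `p = (x,y)`. -/
noncomputable def ineqLhs (n : ℕ) (β₀ : ℝ) (β : Fin n → ℝ) (β' : ℝ)
    (p : (Fin n → ℝ) × ℝ) : ℝ :=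
  β₀ + ∑ j, β j * p.1 j + β' * p.2

/-- A core inequality: `β′ ∈ {1,-1}` and nondecreasing coefficients `β₁ ≤ … ≤ βₙ`. -/
def IsCore (n : ℕ) (β : Fin n → ℝ) (β' : ℝ) : Prop :=
  (β' = 1 ∨ β' = -1) ∧ Monotone β

/-- Validity of the inequality `β₀ + ∑_j β_j x_j + β′ y ≥ 0` on `conv(G)`. -/
def IsValid (n : ℕ) (ℓ u : ℝ) (c : ℕ → ℝ) (β₀ : ℝ) (β : Fin n → ℝ) (β' : ℝ) : Prop :=
  ∀ p ∈ convexHull ℝ (Gset n ℓ u c), 0 ≤ ineqLhs n β₀ β β' p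

/-- The point `p` satisfies the inequality exactly (with equality). -/
def ExactAt (n : ℕ) (β₀ : ℝ) (β : Fin n → ℝ) (β' : ℝ) (p : (Fin n → ℝ) × ℝ) : Prop :=
  ineqLhs n β₀ β β' p = 0

/-- Facet-defining: there are `n+1` affinely independent points of `conv(G)`
satisfying the inequality exactly. -/
def IsFacet (n : ℕ) (ℓ u : ℝ) (c : ℕ → ℝ) (β₀ : ℝ) (β : Fin n → ℝ) (β' : ℝ) : Prop :=
  ∃ pts : Fin (n + 1) → (Fin n → ℝ) × ℝ,
    AffineIndependent ℝ pts ∧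
    ∀ i, pts i ∈ convexHull ℝ (Gset n ℓ u c) ∧ ExactAt n β₀ β β' (pts i)

/-- The point `(x^k, m(x^k))` of `G`. -/
noncomputable def vtx (n : ℕ) (ℓ u : ℝ) (c : ℕ → ℝ) (k : ℕ) : (Fin n → ℝ) × ℝ :=
  (xpt n ℓ u k, mval n ℓ u c k)

section BoxInterpolation

variable {ι : Type*} [DecidableEq ι] {ℓ u : ℝ}

def boxVertex (ℓ u : ℝ) (S : Finset ι) : ι → ℝ :=
  fun j => if j ∈ S then u else ℓ

theorem boxVertex_mem_Icc (hlu : ℓ ≤ u) (S : Finset ι) (j : ι) :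
    boxVertex ℓ u S j ∈ Set.Icc ℓ u := by
  unfold boxVertex
  split_ifs <;> simp [hlu]

variable [Fintype ι]

noncomputable def boxWeight (ℓ u : ℝ) (x : ι → ℝ) (S : Finset ι) : ℝ :=
  (∏ j ∈ S, (x j - ℓ) / (u - ℓ)) * ∏ j ∈ Sᶜ, (u - x j) / (u - ℓ)

theorem exists_eq_boxVertex {x : ι → ℝ} (hx : ∀ j, x j = ℓ ∨ x j = u) :
    ∃ S, boxVertex ℓ u S = x := by
  refine ⟨univ.filter (fun j => x j = u), funext fun j => ?_⟩
  rcases hx j with h | h <;> by_cases h' : x j = u <;> simp_all [boxVertex]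

theorem sum_boxWeight_mul_prod_boxVertex (hlu : ℓ ≠ u) (x : ι → ℝ) (J : Finset ι) :
    ∑ S, boxWeight ℓ u x S * ∏ j ∈ J, boxVertex ℓ u S j = ∏ j ∈ J, x j := by
  have hul : u - ℓ ≠ 0 := sub_ne_zero.mpr hlu.symm
  have hvertex : ∀ S : Finset ι, ∏ j ∈ J, boxVertex ℓ u S j =
      (∏ j ∈ S, if j ∈ J then u else 1) * ∏ j ∈ Sᶜ, if j ∈ J then ℓ else 1 := by
    intro S
    rw [← Fintype.prod_ite_mem, ← prod_mul_prod_compl S]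
    congr 1 <;> refine prod_congr rfl fun j hj => ?_ <;> simp_all [boxVertex]
  have hfactor : ∀ j, (x j - ℓ) / (u - ℓ) * (if j ∈ J then u else 1) +
      (u - x j) / (u - ℓ) * (if j ∈ J then ℓ else 1) = if j ∈ J then x j else 1 := by
    intro j
    split_ifs <;> field_simp <;> ring
  calc ∑ S, boxWeight ℓ u x S * ∏ j ∈ J, boxVertex ℓ u S j
      = ∑ S : Finset ι, (∏ j ∈ S, (x j - ℓ) / (u - ℓ) * (if j ∈ J then u else 1)) *
          ∏ j ∈ Sᶜ, (u - x j) / (u - ℓ) * (if j ∈ J then ℓ else 1) := by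
        refine sum_congr rfl fun S _ => ?_
        rw [hvertex, boxWeight, prod_mul_distrib, prod_mul_distrib]
        ring
    _ = ∏ j, (if j ∈ J then x j else 1) := by
        rw [← Fintype.prod_add]
        exact Fintype.prod_congr _ _ hfactor
    _ = ∏ j ∈ J, x j := Fintype.prod_ite_mem J x

theorem sum_boxWeight (hlu : ℓ ≠ u) (x : ι → ℝ) : ∑ S, boxWeight ℓ u x S = 1 := by
  simpa using sum_boxWeight_mul_prod_boxVertex hlu x ∅

theorem sum_boxWeight_mul_boxVertex (hlu : ℓ ≠ u) (x : ι → ℝ) (j : ι) :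
    ∑ S, boxWeight ℓ u x S * boxVertex ℓ u S j = x j := by
  simpa using sum_boxWeight_mul_prod_boxVertex hlu x {j}

theorem boxWeight_nonneg (hlu : ℓ < u) {x : ι → ℝ} (hx : ∀ j, x j ∈ Set.Icc ℓ u)
    (S : Finset ι) : 0 ≤ boxWeight ℓ u x S := by
  have hul : 0 ≤ u - ℓ := by linarith
  exact mul_nonneg (prod_nonneg fun j _ => div_nonneg (by linarith [(hx j).1]) hul)
    (prod_nonneg fun j _ => div_nonneg (by linarith [(hx j).2]) hul)

theorem boxWeight_ne_zero_iff (hlu : ℓ ≠ u) (x : ι → ℝ) (S : Finset ι) :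
    boxWeight ℓ u x S ≠ 0 ↔ (∀ j ∈ S, x j ≠ ℓ) ∧ ∀ j ∉ S, x j ≠ u := by
  have hul : u - ℓ ≠ 0 := sub_ne_zero.mpr hlu.symm
  simp [boxWeight, prod_ne_zero_iff, hul, sub_eq_zero, eq_comm (a := u)]

variable {f : (ι → ℝ) → ℝ}

def IsBoxInterpolant (ℓ u : ℝ) (f : (ι → ℝ) → ℝ) : Prop :=
  ∀ x, f x = ∑ S, boxWeight ℓ u x S * f (boxVertex ℓ u S)

theorem isBoxInterpolant_prod (hlu : ℓ ≠ u) (J : Finset ι) :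
    IsBoxInterpolant ℓ u fun x => ∏ j ∈ J, x j :=
  fun x => (sum_boxWeight_mul_prod_boxVertex hlu x J).symm

theorem isBoxInterpolant_apply (hlu : ℓ ≠ u) (j : ι) : IsBoxInterpolant ℓ u fun x => x j :=
  fun x => (sum_boxWeight_mul_boxVertex hlu x j).symm

theorem isBoxInterpolant_const (hlu : ℓ ≠ u) (a : ℝ) :
    IsBoxInterpolant ℓ u fun _ : ι → ℝ => a := by
  intro x
  rw [← sum_mul, sum_boxWeight hlu, one_mul]

theorem IsBoxInterpolant.add {g : (ι → ℝ) → ℝ} (hf : IsBoxInterpolant ℓ u f)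
    (hg : IsBoxInterpolant ℓ u g) : IsBoxInterpolant ℓ u fun x => f x + g x := by
  intro x
  simp only [mul_add, sum_add_distrib, ← hf x, ← hg x]

theorem IsBoxInterpolant.const_mul (hf : IsBoxInterpolant ℓ u f) (a : ℝ) :
    IsBoxInterpolant ℓ u fun x => a * f x := by
  intro x
  simp only [hf x, mul_sum]
  exact sum_congr rfl fun S _ => by ring

theorem IsBoxInterpolant.sum {κ : Type*} {s : Finset κ} {g : κ → (ι → ℝ) → ℝ}
    (hg : ∀ k ∈ s, IsBoxInterpolant ℓ u (g k)) :
    IsBoxInterpolant ℓ u fun x => ∑ k ∈ s, g k x := by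
  intro x
  simp only [mul_sum]
  rw [sum_comm]
  exact sum_congr rfl fun k hk => hg k hk x

theorem IsBoxInterpolant.vertex_eq_zero (hf : IsBoxInterpolant ℓ u f) (hlu : ℓ < u)
    (hnonneg : ∀ S, 0 ≤ f (boxVertex ℓ u S)) {x : ι → ℝ} (hx : ∀ j, x j ∈ Set.Icc ℓ u)
    (hfx : f x = 0) {S : Finset ι} (hSℓ : ∀ j ∈ S, x j ≠ ℓ) (hSu : ∀ j ∉ S, x j ≠ u) :
    f (boxVertex ℓ u S) = 0 := by
  rw [hf x] at hfx
  have hterm := (sum_eq_zero_iff_of_nonneg fun T _ =>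
    mul_nonneg (boxWeight_nonneg hlu hx T) (hnonneg T)).mp hfx S (mem_univ S)
  exact (mul_eq_zero.mp hterm).resolve_left
    ((boxWeight_ne_zero_iff hlu.ne x S).mpr ⟨hSℓ, hSu⟩)

theorem IsBoxInterpolant.eq_zero (hf : IsBoxInterpolant ℓ u f) (hlu : ℓ ≠ u) {x : ι → ℝ}
    (hvertex : ∀ S, (∀ j ∈ S, x j ≠ ℓ) → (∀ j ∉ S, x j ≠ u) → f (boxVertex ℓ u S) = 0) :
    f x = 0 := by
  rw [hf x]
  refine sum_eq_zero fun S _ => ?_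
  by_cases hS : boxWeight ℓ u x S = 0
  · rw [hS, zero_mul]
  · obtain ⟨hSℓ, hSu⟩ := (boxWeight_ne_zero_iff hlu x S).mp hS
    rw [hvertex S hSℓ hSu, mul_zero]

theorem IsBoxInterpolant.eq_zero_iff_forall_vertex (hf : IsBoxInterpolant ℓ u f) (hlu : ℓ < u)
    (hnonneg : ∀ S, 0 ≤ f (boxVertex ℓ u S)) {x : ι → ℝ} (hx : ∀ j, x j ∈ Set.Icc ℓ u) :
    f x = 0 ↔ ∀ y : ι → ℝ, (∀ j, y j = ℓ ∨ y j = u) →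
      (∀ j, x j = ℓ → y j = ℓ) → (∀ j, x j = u → y j = u) → f y = 0 := by
  constructor
  · rintro hfx y hy hyℓ hyu
    obtain ⟨S, rfl⟩ := exists_eq_boxVertex hy
    refine hf.vertex_eq_zero hlu hnonneg hx hfx (fun j hj hxj => ?_) (fun j hj hxj => ?_)
    · simpa [boxVertex, hj, hlu.ne'] using hyℓ j hxj
    · simpa [boxVertex, hj, hlu.ne] using hyu j hxj
  · intro hvertex
    refine hf.eq_zero hlu.ne fun S hSℓ hSu => hvertex _ (fun j => ?_) (fun j hj => ?_) ?_
    · by_cases hj : j ∈ S <;> simp [boxVertex, hj]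
    · simp [boxVertex, show j ∉ S from fun hjS => hSℓ j hjS hj]
    · intro j hj
      simp [boxVertex, show j ∈ S from by_contra fun hjS => hSu j hjS hj]

theorem IsBoxInterpolant.eq_zero_iff_forall_face (hf : IsBoxInterpolant ℓ u f) (hlu : ℓ < u)
    (hnonneg : ∀ S, 0 ≤ f (boxVertex ℓ u S)) {x : ι → ℝ} (hx : ∀ j, x j ∈ Set.Icc ℓ u) :
    f x = 0 ↔ ∀ y : ι → ℝ, (∀ j, y j ∈ Set.Icc ℓ u) →
      (∀ j, x j = ℓ → y j = ℓ) → (∀ j, x j = u → y j = u) → f y = 0 := by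
  refine ⟨fun hfx y hy hyℓ hyu => ?_, fun h => h x hx (fun _ => id) (fun _ => id)⟩
  -- The vertices of the smallest face through `y` lie in the smallest face through `x`.
  rw [hf.eq_zero_iff_forall_vertex hlu hnonneg hy]
  exact fun z hz hzℓ hzu => (hf.eq_zero_iff_forall_vertex hlu hnonneg hx).mp hfx z hz
    (fun j hj => hzℓ j (hyℓ j hj)) (fun j hj => hzu j (hyu j hj))

end BoxInterpolation

theorem isBoxInterpolant_mPoly {n : ℕ} {ℓ u : ℝ} (hlu : ℓ ≠ u) (c : ℕ → ℝ) :
    IsBoxInterpolant ℓ u (mPoly n c) :=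
  IsBoxInterpolant.sum fun i _ => (IsBoxInterpolant.sum fun J _ =>
    isBoxInterpolant_prod hlu J).const_mul (c i)

theorem isBoxInterpolant_ineqLhs_graph {n : ℕ} {ℓ u : ℝ} (hlu : ℓ ≠ u) (c : ℕ → ℝ)
    (β₀ : ℝ) (β : Fin n → ℝ) (β' : ℝ) :
    IsBoxInterpolant ℓ u fun x => ineqLhs n β₀ β β' (x, mPoly n c x) :=
  ((isBoxInterpolant_const hlu β₀).add (IsBoxInterpolant.sum fun j _ =>
    (isBoxInterpolant_apply hlu j).const_mul (β j))).add
    ((isBoxInterpolant_mPoly hlu c).const_mul β')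

theorem stmt14_general (n : ℕ) (ℓ u : ℝ) (hlu : ℓ < u) (c : ℕ → ℝ)
    (β₀ : ℝ) (β : Fin n → ℝ) (β' : ℝ)
    (hvalid : IsValid n ℓ u c β₀ β β')
    (xt : Fin n → ℝ) (hxt : xt ∈ Xbox n ℓ u) :
    (ExactAt n β₀ β β' (xt, mPoly n c xt) ↔
      ∀ xh ∈ Xbox n ℓ u,
        (∀ j, xt j = ℓ → xh j = ℓ) → (∀ j, xt j = u → xh j = u) →
        ExactAt n β₀ β β' (xh, mPoly n c xh)) ∧
    (ExactAt n β₀ β β' (xt, mPoly n c xt) ↔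
      ∀ xh : Fin n → ℝ, (∀ j, xh j = ℓ ∨ xh j = u) →
        (∀ j, xt j = ℓ → xh j = ℓ) → (∀ j, xt j = u → xh j = u) →
        ExactAt n β₀ β β' (xh, mPoly n c xh)) := by
  have hinterp := isBoxInterpolant_ineqLhs_graph hlu.ne c β₀ β β'
  have hnonneg : ∀ S, 0 ≤ ineqLhs n β₀ β β' (boxVertex ℓ u S, mPoly n c (boxVertex ℓ u S)) :=
    fun S => hvalid _ (subset_convexHull ℝ _ ⟨boxVertex_mem_Icc hlu.le S, rfl⟩)
  exact ⟨hinterp.eq_zero_iff_forall_face hlu hnonneg hxt,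
    hinterp.eq_zero_iff_forall_vertex hlu hnonneg hxt⟩

/-- For any valid inequality for `conv(G)` and `x̃ ∈ X`, the following
are equivalent: (1) `(x̃, m(x̃))` satisfies it exactly; (2) `(x̂, m(x̂))` satisfies it
exactly for every `x̂ ∈ X` agreeing with `x̃` on the coordinates where `x̃` is at a
bound; (3) likewise for every vertex `x̂` of `X`. -/
theorem stmt14 (n : ℕ) (hn : 2 ≤ n) (ℓ u : ℝ) (hlu : ℓ < u) (c : ℕ → ℝ)
    (β₀ : ℝ) (β : Fin n → ℝ) (β' : ℝ)
    (hvalid : IsValid n ℓ u c β₀ β β')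
    (xt : Fin n → ℝ) (hxt : xt ∈ Xbox n ℓ u) :
    (ExactAt n β₀ β β' (xt, mPoly n c xt) ↔
      ∀ xh ∈ Xbox n ℓ u,
        (∀ j, xt j = ℓ → xh j = ℓ) → (∀ j, xt j = u → xh j = u) →
        ExactAt n β₀ β β' (xh, mPoly n c xh)) ∧
    (ExactAt n β₀ β β' (xt, mPoly n c xt) ↔
      ∀ xh : Fin n → ℝ, (∀ j, xh j = ℓ ∨ xh j = u) →
        (∀ j, xt j = ℓ → xh j = ℓ) → (∀ j, xt j = u → xh j = u) →
        ExactAt n β₀ β β' (xh, mPoly n c xh)) :=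
  stmt14_general n ℓ u hlu c β₀ β β' hvalid xt hxt
end

section
/- Let (x̃,ỹ) ∈ G with x̃ not equal to any of the points x^0,…,x^n. Let r be the smallest index j with x̃_j < u, let s be the largest index j with x̃_j > ℓ, let p be the number of coordinates of x̃ equal to u, and let b be the number of coordinates of x̃ equal to ℓ. Then (x̃,ỹ) satisfies a valid core inequality β₀ + Σ_{j=1}^n β_j x_j + β′ y ≥ 0 exactly if and only if (x^j, m(x^j)) satisfies the inequality exactly for every j ∈ {p,…,n−b} and β_r = β_{r+1} = … = β_s. -/
open Finset

/-! On the graph, the left-hand side `h(x) = β₀ + ∑ βⱼ xⱼ + β′ m(x)` is affine in each coordinate.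
Hence `h(x̃)` is a convex combination, with strictly positive weights, of the values of `h` at the
corners of the smallest face of the box containing `x̃`: the points equal to `u` on `A` and `ℓ` off
`A`, for `{x̃ⱼ = u} ⊆ A ⊆ {x̃ⱼ ≠ ℓ}`. Validity makes these values nonnegative, so `h(x̃) = 0`
exactly when `h` vanishes at all of them.

As `m` is symmetric, `h` at the corner `A` depends only on `|A|` and `∑_{j ∈ A} βⱼ`. Every such `A`
contains `{j < r}` and lies in `{j ≤ s}`, so if `β` is constant on `[r, s]` the corner `A` can be
traded for the vertex `x^{|A|}`, and `|A|` runs through `[p, n - b]`. Conversely, exchanging `s`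
for `r` in a tight corner and using validity gives `β_s ≤ β_r`, so the monotone `β` is constant
on `[r, s]`. -/

open Function
open scoped symmDiff

theorem forall_subset_insert_iff {ι : Type*} [DecidableEq ι] {a : ι} {T : Finset ι}
    {P : Finset ι → Prop} :
    (∀ S ⊆ insert a T, P S) ↔ (∀ S ⊆ T, P (insert a S)) ∧ ∀ S ⊆ T, P S := by
  simp only [← mem_powerset, powerset_insert, forall_mem_union, forall_mem_image]
  exact and_comm

theorem sum_eq_sum_of_card_eq_of_symmDiff {ι M : Type*} [DecidableEq ι]
    [AddCommMonoid M] {A B : Finset ι} (f : ι → M) (hcard : #A = #B)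
    (hf : ∀ i ∈ A ∆ B, ∀ j ∈ A ∆ B, f i = f j) : ∑ j ∈ A, f j = ∑ j ∈ B, f j := by
  rcases (A \ B).eq_empty_or_nonempty with hAB | ⟨i, hi⟩
  · rw [eq_of_subset_of_card_le (sdiff_eq_empty_iff_subset.1 hAB) hcard.ge]
  · have hi' : i ∈ A ∆ B := mem_symmDiff.2 (Or.inl (mem_sdiff.1 hi))
    rw [← sum_inter_add_sum_sdiff A B, ← sum_inter_add_sum_sdiff B A, inter_comm,
      sum_congr rfl fun j hj => hf j (mem_symmDiff.2 (Or.inl (mem_sdiff.1 hj))) i hi',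
      sum_congr rfl fun j hj => hf j (mem_symmDiff.2 (Or.inr (mem_sdiff.1 hj))) i hi',
      sum_const, sum_const, card_sdiff_comm hcard]

section Cube

variable {ι : Type*} [DecidableEq ι] {ℓ u : ℝ}

def cornerPt (ℓ u : ℝ) (A : Finset ι) : ι → ℝ :=
  fun j => if j ∈ A then u else ℓ

def boxCorner (ℓ u : ℝ) (T S : Finset ι) (x : ι → ℝ) : ι → ℝ :=
  fun j => if j ∈ T then cornerPt ℓ u S j else x j

def MultiAffine (h : (ι → ℝ) → ℝ) : Prop :=
  ∀ (x : ι → ℝ) (i : ι) (a b t : ℝ),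
    h (update x i (t * a + (1 - t) * b)) = t * h (update x i a) + (1 - t) * h (update x i b)

section BoxCorner

variable {T S : Finset ι} {x : ι → ℝ} {a : ι}

@[simp]
theorem boxCorner_empty : boxCorner ℓ u ∅ S x = x := by
  funext j; simp [boxCorner]

theorem boxCorner_update_upper (ha : a ∉ T) :
    boxCorner ℓ u T S (update x a u) = boxCorner ℓ u (insert a T) (insert a S) x := by
  funext j
  rcases eq_or_ne j a with rfl | hj
  · simp [boxCorner, cornerPt, ha]
  · simp [boxCorner, cornerPt, hj]

theorem boxCorner_update_lower (ha : a ∉ T) (haS : a ∉ S) :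
    boxCorner ℓ u T S (update x a ℓ) = boxCorner ℓ u (insert a T) S x := by
  funext j
  rcases eq_or_ne j a with rfl | hj
  · simp [boxCorner, cornerPt, ha, haS]
  · simp [boxCorner, hj]

end BoxCorner

theorem MultiAffine.nonneg_and_eq_zero_iff {h : (ι → ℝ) → ℝ} (hh : MultiAffine h)
    (hlu : ℓ < u) (T : Finset ι) {x : ι → ℝ} (hx : ∀ i ∈ T, x i ∈ Set.Ioo ℓ u)
    (hc : ∀ S ⊆ T, 0 ≤ h (boxCorner ℓ u T S x)) :
    0 ≤ h x ∧ (h x = 0 ↔ ∀ S ⊆ T, h (boxCorner ℓ u T S x) = 0) := by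
  induction T using Finset.induction_on generalizing x with
  | empty => simpa using hc ∅ le_rfl
  | insert a T ha ih =>
    obtain ⟨t', t, ht', ht, hsum, hxa⟩ :=
      (openSegment_eq_Ioo (𝕜 := ℝ) hlu).symm ▸ hx a (mem_insert_self a T)
    have hxa' : x a = t * u + (1 - t) * ℓ := by
      rw [← hxa, smul_eq_mul, smul_eq_mul, ← hsum]; ring
    have hdecomp : h x = t * h (update x a u) + (1 - t) * h (update x a ℓ) := by
      rw [← hh, ← hxa', update_eq_self]
    have hup : ∀ S ⊆ T, boxCorner ℓ u T S (update x a u) =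
        boxCorner ℓ u (insert a T) (insert a S) x := fun S _ => boxCorner_update_upper ha
    have hlo : ∀ S ⊆ T, boxCorner ℓ u T S (update x a ℓ) = boxCorner ℓ u (insert a T) S x :=
      fun S hS => boxCorner_update_lower ha (fun haS => ha (hS haS))
    have hxT : ∀ v, ∀ i ∈ T, update x a v i ∈ Set.Ioo ℓ u := fun v i hi => by
      rw [update_of_ne (ne_of_mem_of_not_mem hi ha)]
      exact hx i (mem_insert_of_mem hi)
    rw [forall_subset_insert_iff] at hc ⊢
    obtain ⟨hu0, huiff⟩ := ih (hxT u) fun S hS => hup S hS ▸ hc.1 S hS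
    obtain ⟨hl0, hliff⟩ := ih (hxT ℓ) fun S hS => hlo S hS ▸ hc.2 S hS
    refine ⟨hdecomp ▸ by nlinarith, ?_⟩
    have hcomb : h x = 0 ↔ h (update x a u) = 0 ∧ h (update x a ℓ) = 0 := by
      rw [hdecomp, add_eq_zero_iff_of_nonneg (by nlinarith) (by nlinarith),
        mul_eq_zero, mul_eq_zero]
      simp only [ht.ne', (by linarith : 1 - t ≠ 0), false_or]
    rw [hcomb, huiff, hliff]
    exact and_congr (forall₂_congr fun S hS => by rw [hup S hS])
      (forall₂_congr fun S hS => by rw [hlo S hS])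

theorem MultiAffine.eq_zero_iff_forall_cornerPt [Fintype ι] {h : (ι → ℝ) → ℝ}
    (hh : MultiAffine h) (hlu : ℓ < u) {x : ι → ℝ}
    (hx : ∀ i, x i ∈ Set.Icc ℓ u) (hc : ∀ A, 0 ≤ h (cornerPt ℓ u A)) :
    h x = 0 ↔ ∀ A : Finset ι, univ.filter (fun i => x i = u) ⊆ A →
      A ⊆ univ.filter (fun i => x i ≠ ℓ) → h (cornerPt ℓ u A) = 0 := by
  set U := univ.filter fun i => x i = u
  set F := univ.filter fun i => x i ∈ Set.Ioo ℓ u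
  have hcorner : ∀ S ⊆ F, boxCorner ℓ u F S x = cornerPt ℓ u (U ∪ S) := by
    intro S hS
    funext j
    have hxj := hx j
    have hjS : j ∈ S → j ∈ F := @hS j
    simp only [boxCorner, cornerPt, U, F, mem_union, mem_filter, mem_univ, true_and, Set.mem_Ioo,
      Set.mem_Icc] at hxj hjS ⊢
    split_ifs <;> grind
  have hUF : U ∪ F = univ.filter fun i => x i ≠ ℓ := by
    ext j
    have hxj := hx j
    simp only [U, F, mem_union, mem_filter, mem_univ, true_and, Set.mem_Ioo, Set.mem_Icc] at hxj ⊢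
    grind
  rw [(hh.nonneg_and_eq_zero_iff hlu F (by simp [F]) fun S hS => hcorner S hS ▸ hc _).2, ← hUF]
  constructor
  · intro h0 A hUA hAUF
    have := h0 (A \ U) (sdiff_le_iff.2 hAUF)
    rwa [hcorner _ (sdiff_le_iff.2 hAUF), union_sdiff_of_subset hUA] at this
  · intro h0 S hS
    rw [hcorner S hS]
    exact h0 _ subset_union_left (union_subset_union_right hS)

theorem cornerPt_comp_perm (σ : Equiv.Perm ι) (A : Finset ι) :
    cornerPt ℓ u (A.map σ.toEmbedding) ∘ σ = cornerPt ℓ u A := by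
  funext j
  simp [cornerPt]

theorem apply_cornerPt_eq_of_card_eq [Fintype ι] {f : (ι → ℝ) → ℝ}
    (hf : ∀ (σ : Equiv.Perm ι) (x : ι → ℝ), f (x ∘ σ) = f x) {A B : Finset ι}
    (hcard : #A = #B) : f (cornerPt ℓ u A) = f (cornerPt ℓ u B) := by
  obtain ⟨σ, rfl⟩ := Equiv.Perm.exists_map_finset_eq A B hcard
  rw [← hf σ (cornerPt ℓ u (A.map σ.toEmbedding)), cornerPt_comp_perm]

theorem sum_mul_update [Fintype ι] (β x : ι → ℝ) (i : ι) (v : ℝ) :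
    ∑ j, β j * update x i v j = β i * v + ∑ j ∈ univ \ {i}, β j * x j := by
  simp only [apply_update (fun j => (β j * ·)), sum_update_of_mem (mem_univ i)]

theorem sum_mul_cornerPt [Fintype ι] (β : ι → ℝ) (A : Finset ι) :
    ∑ j, β j * cornerPt ℓ u A j = ℓ * ∑ j, β j + (u - ℓ) * ∑ j ∈ A, β j := by
  have hsplit : ∀ j, β j * cornerPt ℓ u A j = ℓ * β j + (u - ℓ) * if j ∈ A then β j else 0 :=
    fun j => by by_cases hj : j ∈ A <;> simp [cornerPt, hj] <;> ring
  simp only [hsplit, sum_add_distrib, ← mul_sum, sum_ite_mem, univ_inter]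

end Cube

section Graph

variable {n : ℕ} {ℓ u : ℝ} {c : ℕ → ℝ} {β₀ β' : ℝ} {β : Fin n → ℝ} {r s : Fin n}

noncomputable def graphLhs (n : ℕ) (c : ℕ → ℝ) (β₀ : ℝ) (β : Fin n → ℝ) (β' : ℝ)
    (x : Fin n → ℝ) : ℝ :=
  ineqLhs n β₀ β β' (x, mPoly n c x)

theorem exactAt_graph_iff {x : Fin n → ℝ} :
    ExactAt n β₀ β β' (x, mPoly n c x) ↔ graphLhs n c β₀ β β' x = 0 := Iff.rfl

theorem exactAt_vtx_iff {k : ℕ} :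
    ExactAt n β₀ β β' (vtx n ℓ u c k) ↔ graphLhs n c β₀ β β' (xpt n ℓ u k) = 0 := Iff.rfl

theorem mPoly_comp_perm (σ : Equiv.Perm (Fin n)) (x : Fin n → ℝ) :
    mPoly n c (x ∘ σ) = mPoly n c x := by
  refine sum_congr rfl fun i _ => congrArg _ ?_
  calc ∑ J ∈ powersetCard i univ, ∏ j ∈ J, x (σ j)
      = ∑ J ∈ (powersetCard i univ).map (mapEmbedding σ.toEmbedding).toEmbedding,
          ∏ j ∈ J, x j := by simp [prod_map]
    _ = ∑ J ∈ powersetCard i univ, ∏ j ∈ J, x j := by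
      rw [← powersetCard_map, map_univ_equiv]

theorem mPoly_multiAffine : MultiAffine (mPoly n c) := by
  intro x i a b t
  simp only [mPoly, mul_sum, ← sum_add_distrib]
  refine sum_congr rfl fun k _ => sum_congr rfl fun J _ => ?_
  by_cases hiJ : i ∈ J
  · simp only [prod_update_of_mem hiJ]; ring
  · simp only [prod_update_of_notMem hiJ]; ring

theorem graphLhs_multiAffine : MultiAffine (graphLhs n c β₀ β β') := by
  intro x i a b t
  simp only [graphLhs, ineqLhs, mPoly_multiAffine x i a b t, sum_mul_update]
  ring

theorem cornerPt_mem_Xbox (hlu : ℓ ≤ u) (A : Finset (Fin n)) : cornerPt ℓ u A ∈ Xbox n ℓ u :=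
  fun j => by by_cases hj : j ∈ A <;> simp [cornerPt, hj, hlu]

theorem IsValid.graphLhs_nonneg (hv : IsValid n ℓ u c β₀ β β') {x : Fin n → ℝ}
    (hx : x ∈ Xbox n ℓ u) : 0 ≤ graphLhs n c β₀ β β' x :=
  hv _ (subset_convexHull ℝ _ ⟨hx, rfl⟩)

theorem graphLhs_cornerPt_sub {A B : Finset (Fin n)} (hcard : #A = #B) :
    graphLhs n c β₀ β β' (cornerPt ℓ u A) - graphLhs n c β₀ β β' (cornerPt ℓ u B) =
      (u - ℓ) * (∑ j ∈ A, β j - ∑ j ∈ B, β j) := by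
  simp only [graphLhs, ineqLhs, sum_mul_cornerPt,
    apply_cornerPt_eq_of_card_eq mPoly_comp_perm hcard]
  ring

theorem xpt_eq_cornerPt (k : ℕ) :
    xpt n ℓ u k = cornerPt ℓ u (univ.filter fun j : Fin n => (j : ℕ) < k) := by
  funext j
  simp [xpt, cornerPt]

theorem graphLhs_cornerPt_eq_xpt (hβ : ∀ i j : Fin n, r ≤ i → i ≤ s → r ≤ j → j ≤ s → β i = β j)
    {A : Finset (Fin n)} (hrA : ∀ j, j < r → j ∈ A) (hAs : ∀ j ∈ A, j ≤ s)
    (hr : (r : ℕ) ≤ #A) (hs : #A ≤ s + 1) :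
    graphLhs n c β₀ β β' (cornerPt ℓ u A) = graphLhs n c β₀ β β' (xpt n ℓ u #A) := by
  have hcard : #A = #(univ.filter fun j : Fin n => (j : ℕ) < #A) := by
    rw [Fin.card_filter_val_lt, min_eq_right (card_le_univ A |>.trans_eq (Fintype.card_fin n))]
  have hmem : ∀ j ∈ A ∆ univ.filter (fun j : Fin n => (j : ℕ) < #A), r ≤ j ∧ j ≤ s := by
    intro j hj
    rcases mem_symmDiff.1 hj with ⟨hjA, hjk⟩ | ⟨hjk, hjA⟩
    · simp only [mem_filter, mem_univ, true_and, not_lt] at hjk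
      exact ⟨Fin.le_def.2 (hr.trans hjk), hAs j hjA⟩
    · simp only [mem_filter, mem_univ, true_and] at hjk
      exact ⟨not_lt.1 fun hjr => hjA (hrA j hjr), Fin.le_def.2 (by omega)⟩
  rw [xpt_eq_cornerPt, ← sub_eq_zero, graphLhs_cornerPt_sub hcard,
    sum_eq_sum_of_card_eq_of_symmDiff β hcard fun i hi j hj =>
      hβ i j (hmem i hi).1 (hmem i hi).2 (hmem j hj).1 (hmem j hj).2, sub_self, mul_zero]

theorem IsValid.le_of_graphLhs_cornerPt_eq_zero (hv : IsValid n ℓ u c β₀ β β') (hlu : ℓ < u)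
    {A : Finset (Fin n)} (hA : graphLhs n c β₀ β β' (cornerPt ℓ u A) = 0)
    (hsA : s ∈ A) (hrA : r ∉ A) : β s ≤ β r := by
  have hrA' : r ∉ A.erase s := fun h => hrA (mem_of_mem_erase h)
  have hcard : #(insert r (A.erase s)) = #A := by
    rw [card_insert_of_notMem hrA', card_erase_add_one hsA]
  have hsum : ∑ j ∈ insert r (A.erase s), β j - ∑ j ∈ A, β j = β r - β s := by
    rw [sum_insert hrA', ← sum_erase_add A β hsA]
    ring
  have hdiff : graphLhs n c β₀ β β' (cornerPt ℓ u (insert r (A.erase s))) =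
      (u - ℓ) * (β r - β s) := by
    rw [← hsum, ← graphLhs_cornerPt_sub hcard, hA, sub_zero]
  exact sub_nonneg.1 <| nonneg_of_mul_nonneg_right
    (hdiff ▸ hv.graphLhs_nonneg (cornerPt_mem_Xbox hlu.le _)) (sub_pos.2 hlu)

theorem IsValid.forall_cornerPt_eq_zero_iff (hv : IsValid n ℓ u c β₀ β β') (hlu : ℓ < u)
    (hmono : Monotone β) {U V : Finset (Fin n)} (hUV : U ⊆ V) (hrU : ∀ j, j < r → j ∈ U)
    (hr : r ∉ U) (hs : s ∈ V) (hVs : ∀ j ∈ V, j ≤ s) :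
    (∀ A, U ⊆ A → A ⊆ V → graphLhs n c β₀ β β' (cornerPt ℓ u A) = 0) ↔
      (∀ k, #U ≤ k → k ≤ #V → graphLhs n c β₀ β β' (xpt n ℓ u k) = 0) ∧
        ∀ i j : Fin n, r ≤ i → i ≤ s → r ≤ j → j ≤ s → β i = β j := by
  have hrcard : (r : ℕ) ≤ #U := by
    have := card_le_card (s := univ.filter fun j : Fin n => (j : ℕ) < r) fun j hj =>
      hrU j (by simpa using hj)
    rwa [Fin.card_filter_val_lt, min_eq_right r.isLt.le] at this
  have hVcard : #V ≤ s + 1 := by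
    have := card_le_card (t := univ.filter fun j : Fin n => (j : ℕ) < s + 1) fun j hj => by
      simpa [Nat.lt_succ_iff] using hVs j hj
    exact this.trans (Fin.card_filter_val_lt.trans_le (min_le_right _ _))
  have htransfer (hβ : ∀ i j : Fin n, r ≤ i → i ≤ s → r ≤ j → j ≤ s → β i = β j)
      (A : Finset (Fin n)) (hUA : U ⊆ A) (hAV : A ⊆ V) :
      graphLhs n c β₀ β β' (cornerPt ℓ u A) = graphLhs n c β₀ β β' (xpt n ℓ u #A) :=
    graphLhs_cornerPt_eq_xpt hβ (fun j hj => hUA (hrU j hj)) (fun j hj => hVs j (hAV hj))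
      (hrcard.trans (card_le_card hUA)) ((card_le_card hAV).trans hVcard)
  constructor
  · intro h0
    have hsr : β s ≤ β r := by
      rcases le_or_gt s r with hsr | hrs
      · exact hmono hsr
      · exact hv.le_of_graphLhs_cornerPt_eq_zero hlu
          (h0 _ (subset_erase.2 ⟨hUV, hr⟩) (erase_subset r V)) (mem_erase.2 ⟨hrs.ne', hs⟩)
          (notMem_erase r V)
    have hβ : ∀ i j : Fin n, r ≤ i → i ≤ s → r ≤ j → j ≤ s → β i = β j :=
      fun i j hri his hrj hjs => by
        linarith [hmono hri, hmono his, hmono hrj, hmono hjs]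
    refine ⟨fun k hUk hkV => ?_, hβ⟩
    obtain ⟨A, hUA, hAV, rfl⟩ := exists_subsuperset_card_eq hUV hUk hkV
    rw [← htransfer hβ A hUA hAV]
    exact h0 A hUA hAV
  · rintro ⟨hk, hβ⟩ A hUA hAV
    rw [htransfer hβ A hUA hAV]
    exact hk _ (card_le_card hUA) (card_le_card hAV)

end Graph

theorem stmt15_general (n : ℕ) (ℓ u : ℝ) (hlu : ℓ < u) (c : ℕ → ℝ)
    (β₀ : ℝ) (β : Fin n → ℝ) (β' : ℝ)
    (hcore : IsCore n β β') (hvalid : IsValid n ℓ u c β₀ β β')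
    (xt : Fin n → ℝ) (yt : ℝ) (hG : (xt, yt) ∈ Gset n ℓ u c)
    (r s : Fin n)
    (hr : IsLeast {j : Fin n | xt j < u} r)
    (hs : IsGreatest {j : Fin n | ℓ < xt j} s)
    (p b : ℕ)
    (hp : p = (Finset.univ.filter (fun j : Fin n => xt j = u)).card)
    (hb : b = (Finset.univ.filter (fun j : Fin n => xt j = ℓ)).card) :
    ExactAt n β₀ β β' (xt, yt) ↔
      ((∀ k, p ≤ k → k ≤ n - b → ExactAt n β₀ β β' (vtx n ℓ u c k)) ∧
        ∀ i j : Fin n, r ≤ i → i ≤ s → r ≤ j → j ≤ s → β i = β j) := by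
  obtain ⟨hbox, hyt⟩ : xt ∈ Xbox n ℓ u ∧ yt = mPoly n c xt := hG
  subst hyt
  have hV : #(univ.filter fun j => xt j ≠ ℓ) = n - b := by
    rw [hb, filter_not, card_sdiff_of_subset (filter_subset _ _), card_univ, Fintype.card_fin]
  have hrU : ∀ j, j < r → j ∈ univ.filter fun j => xt j = u := fun j hj => by
    simpa using le_antisymm (hbox j).2 (not_lt.1 fun hju => hj.not_ge (hr.2 hju))
  have hVs : ∀ j ∈ univ.filter fun j => xt j ≠ ℓ, j ≤ s := fun j hj =>
    hs.2 (lt_of_le_of_ne (hbox j).1 (Ne.symm (mem_filter.1 hj).2))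
  simp only [exactAt_graph_iff, exactAt_vtx_iff]
  rw [graphLhs_multiAffine.eq_zero_iff_forall_cornerPt hlu hbox
    fun A => hvalid.graphLhs_nonneg (cornerPt_mem_Xbox hlu.le A), hp, ← hV]
  exact hvalid.forall_cornerPt_eq_zero_iff hlu hcore.2
    (monotone_filter_right _ fun j _ (hju : xt j = u) => by rw [hju]; exact hlu.ne') hrU
    (by simpa using hr.1.ne) (by simpa using hs.1.ne') hVs

/-- For `(x̃,ỹ) ∈ G` with `x̃` not one of the `x^k`, with `r` the
smallest index with `x̃_j < u`, `s` the largest index with `x̃_j > ℓ`, `p` the number of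
coordinates equal to `u` and `b` the number equal to `ℓ`: the point `(x̃,ỹ)` satisfies a
valid core inequality exactly iff `(x^j, m(x^j))` satisfies it exactly for every
`j ∈ {p,…,n−b}` and `β_r = … = β_s`. -/
theorem stmt15 (n : ℕ) (hn : 2 ≤ n) (ℓ u : ℝ) (hlu : ℓ < u) (c : ℕ → ℝ)
    (β₀ : ℝ) (β : Fin n → ℝ) (β' : ℝ)
    (hcore : IsCore n β β') (hvalid : IsValid n ℓ u c β₀ β β')
    (xt : Fin n → ℝ) (yt : ℝ) (hG : (xt, yt) ∈ Gset n ℓ u c)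
    (hnot : ∀ k ≤ n, xt ≠ xpt n ℓ u k)
    (r s : Fin n)
    (hr : IsLeast {j : Fin n | xt j < u} r)
    (hs : IsGreatest {j : Fin n | ℓ < xt j} s)
    (p b : ℕ)
    (hp : p = (Finset.univ.filter (fun j : Fin n => xt j = u)).card)
    (hb : b = (Finset.univ.filter (fun j : Fin n => xt j = ℓ)).card) :
    ExactAt n β₀ β β' (xt, yt) ↔
      ((∀ k, p ≤ k → k ≤ n - b → ExactAt n β₀ β β' (vtx n ℓ u c k)) ∧
        ∀ i j : Fin n, r ≤ i → i ≤ s → r ≤ j → j ≤ s → β i = β j) :=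
  stmt15_general n ℓ u hlu c β₀ β β' hcore hvalid xt yt hG r s hr hs p b hp hb
end
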